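/- Assume additionally that there exist constants D, γ_D > 0 such that V(t) ≥ γ_D·t^{D/2} for every t > 0. Let 1 ≤ p < ∞. Then there exists a constant C₁ > 0 (depending only on N, D, γ_D, p) such that for every f ∈ L^p(ℝᴺ), every X ∈ ℝᴺ, and every z > 0 one has |𝒫_z f(X)| ≤ C₁·z^{−D/p}·‖f‖_{L^p} (ultracontractivity of the Poisson semigroup). -/

import Mathlib

open MeasureTheory Matrix Real
open scoped ENNReal Topology

noncomputable section

/-- The covariance matrix `K(t) = (1/t) ∫₀ᵗ e^{sB} Q e^{sBᵀ} ds`. -/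
def hK {N : ℕ} (Q B : Matrix (Fin N) (Fin N) ℝ) (t : ℝ) : Matrix (Fin N) (Fin N) ℝ :=
  Matrix.of fun i j =>
    (1 / t) * ∫ s in (0:ℝ)..t, (NormedSpace.exp (s • B) * Q * NormedSpace.exp (s • Bᵀ)) i j

/-- The intertwined pseudo-distance `m_t(X,Y) = ⟨K(t)⁻¹(Y - e^{tB}X), Y - e^{tB}X⟩^{1/2}`. -/
def hm {N : ℕ} (Q B : Matrix (Fin N) (Fin N) ℝ) (t : ℝ) (X Y : Fin N → ℝ) : ℝ :=
  Real.sqrt (dotProduct ((hK Q B t)⁻¹.mulVec (Y - (NormedSpace.exp (t • B)).mulVec X))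
    (Y - (NormedSpace.exp (t • B)).mulVec X))

/-- The volume of the unit ball in `ℝᴺ`. -/
def omegaN (N : ℕ) : ℝ := (volume (Metric.ball (0 : EuclideanSpace ℝ (Fin N)) 1)).toReal

/-- The volume function `V(t) = ω_N (det (t K(t)))^{1/2}`. -/
def hV {N : ℕ} (Q B : Matrix (Fin N) (Fin N) ℝ) (t : ℝ) : ℝ :=
  omegaN N * Real.sqrt ((t • hK Q B t).det)

/-- Hörmander's kernel `p(X,Y,t) = (4π)^{-N/2} ω_N V(t)⁻¹ exp(-m_t(X,Y)²/(4t))`. -/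
def hkernel {N : ℕ} (Q B : Matrix (Fin N) (Fin N) ℝ) (X Y : Fin N → ℝ) (t : ℝ) : ℝ :=
  ((4 * π) ^ (-(N : ℝ) / 2) * omegaN N / hV Q B t) * Real.exp (-(hm Q B t X Y) ^ 2 / (4 * t))

/-- The Hörmander semigroup `P_t f(X) = ∫ p(X,Y,t) f(Y) dY`. -/
def hP {N : ℕ} (Q B : Matrix (Fin N) (Fin N) ℝ) (t : ℝ) (f : (Fin N → ℝ) → ℝ)
    (X : Fin N → ℝ) : ℝ :=
  ∫ Y, hkernel Q B X Y t * f Y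

/-- The Riesz potential `ℐ_α f(X) = Γ(α/2)⁻¹ ∫₀^∞ t^{α/2-1} P_t f(X) dt`. -/
def riesz {N : ℕ} (Q B : Matrix (Fin N) (Fin N) ℝ) (α : ℝ) (f : (Fin N → ℝ) → ℝ)
    (X : Fin N → ℝ) : ℝ :=
  (1 / Real.Gamma (α / 2)) * ∫ t in Set.Ioi (0:ℝ), t ^ (α / 2 - 1) * hP Q B t f X

/-- The Poisson semigroup `𝒫_z f(X) = (4π)^{-1/2} ∫₀^∞ z t^{-3/2} e^{-z²/(4t)} P_t f(X) dt`. -/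
def poisson {N : ℕ} (Q B : Matrix (Fin N) (Fin N) ℝ) (z : ℝ) (f : (Fin N → ℝ) → ℝ)
    (X : Fin N → ℝ) : ℝ :=
  (4 * π) ^ (-(1:ℝ) / 2) *
    ∫ t in Set.Ioi (0:ℝ), z * t ^ (-(3:ℝ) / 2) * Real.exp (-(z ^ 2) / (4 * t)) * hP Q B t f X

/-- The Poisson radial maximal function `ℳ* f(X) = sup_{z>0} |𝒫_z f(X)|`. -/
def maxP {N : ℕ} (Q B : Matrix (Fin N) (Fin N) ℝ) (f : (Fin N → ℝ) → ℝ)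
    (X : Fin N → ℝ) : ℝ :=
  ⨆ z : {z : ℝ // 0 < z}, |poisson Q B z.1 f X|

/-- The fractional power `(-𝒜)^s f(X) = -(s/Γ(1-s)) ∫₀^∞ t^{-(1+s)} (P_t f(X) - f(X)) dt`. -/
def fracA {N : ℕ} (Q B : Matrix (Fin N) (Fin N) ℝ) (s : ℝ) (f : (Fin N → ℝ) → ℝ)
    (X : Fin N → ℝ) : ℝ :=
  -(s / Real.Gamma (1 - s)) * ∫ t in Set.Ioi (0:ℝ), t ^ (-(1 + s)) * (hP Q B t f X - f X)

/-- The degenerate Ornstein-Uhlenbeck operator `𝒜 f = tr(Q ∇²f) + ⟨BX, ∇f⟩`. -/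
def opA {N : ℕ} (Q B : Matrix (Fin N) (Fin N) ℝ) (f : (Fin N → ℝ) → ℝ)
    (X : Fin N → ℝ) : ℝ :=
  (∑ i, ∑ j, Q i j * fderiv ℝ (fun Y => fderiv ℝ f Y (Pi.single j 1)) X (Pi.single i 1)) +
    ∑ i, B.mulVec X i * fderiv ℝ f X (Pi.single i 1)

/-!
For `t > 0` the kernel `Y ↦ p(X,Y,t)` is a Gaussian whose normalizing factor
`(4π)^{-N/2} ω_N / V(t)` makes it a probability density, and it is bounded by that factor `C`.
Hölder's inequality against a probability density bounded by `C` gives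
`|P_t f(X)| ≤ C^{1/p} ‖f‖_p`, so the volume growth bound yields
`|P_t f(X)| ≤ A t^{-D/(2p)} ‖f‖_p`. Integrating this against the subordination weight of `𝒫_z`
becomes, after the substitution `t ↦ 1/t`, a Gamma integral, which produces the factor `z^{-D/p}`.
-/

open Set

section Gaussian

variable {ι : Type*} [Fintype ι]

lemma exp_neg_mul_dotProduct_self (c : ℝ) (u : ι → ℝ) :
    exp (-(c * (u ⬝ᵥ u))) = ∏ i, exp (-c * u i ^ 2) := by
  rw [← exp_sum, dotProduct, Finset.mul_sum, ← Finset.sum_neg_distrib]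
  exact congrArg exp (Finset.sum_congr rfl fun i _ => by ring)

lemma integrable_exp_neg_mul_dotProduct_self {c : ℝ} (hc : 0 < c) :
    Integrable fun u : ι → ℝ => exp (-(c * (u ⬝ᵥ u))) := by
  simp_rw [exp_neg_mul_dotProduct_self]
  exact Integrable.fintype_prod (f := fun _ x => exp (-c * x ^ 2))
    fun _ => integrable_exp_neg_mul_sq hc

lemma integral_exp_neg_mul_dotProduct_self (c : ℝ) :
    ∫ u : ι → ℝ, exp (-(c * (u ⬝ᵥ u))) = √(π / c) ^ Fintype.card ι := by
  simp_rw [exp_neg_mul_dotProduct_self, volume_pi]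
  rw [integral_fintype_prod_eq_pow (fun x => exp (-c * x ^ 2)), integral_gaussian]

variable [DecidableEq ι]

lemma Matrix.PosSemidef.exists_eq_transpose_mul_self {M : Matrix ι ι ℝ} (hM : M.PosSemidef) :
    ∃ S : Matrix ι ι ℝ, M = Sᵀ * S := by
  open scoped MatrixOrder in
  refine ⟨CFC.sqrt M, ?_⟩
  rw [← conjTranspose_eq_transpose_of_trivial, (CFC.sqrt_nonneg M).posSemidef.1.eq,
    CFC.sqrt_mul_sqrt_self M hM.nonneg]

lemma Matrix.integrable_comp_mulVec {S : Matrix ι ι ℝ} (hS : S.det ≠ 0) {g : (ι → ℝ) → ℝ}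
    (hg : Measurable g) (hgi : Integrable g) : Integrable fun Y => g (S *ᵥ Y) := by
  have hL : Measurable (toLin' S) := (LinearMap.continuous_on_pi _).measurable
  refine (integrable_map_measure hg.aestronglyMeasurable hL.aemeasurable).mp ?_
  rw [Real.map_matrix_volume_pi_eq_smul_volume_pi hS]
  exact hgi.smul_measure ENNReal.ofReal_ne_top

lemma Matrix.integral_comp_mulVec {S : Matrix ι ι ℝ} (hS : S.det ≠ 0) {g : (ι → ℝ) → ℝ}
    (hg : Measurable g) : ∫ Y, g (S *ᵥ Y) = |S.det|⁻¹ * ∫ u, g u := by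
  have hL : Measurable (toLin' S) := (LinearMap.continuous_on_pi _).measurable
  change ∫ Y, g (toLin' S Y) = _
  rw [← integral_map hL.aemeasurable hg.aestronglyMeasurable,
    Real.map_matrix_volume_pi_eq_smul_volume_pi hS, integral_smul_measure,
    ENNReal.toReal_ofReal (abs_nonneg _), abs_inv, smul_eq_mul]

lemma integrable_exp_neg_mul_quadForm {M : Matrix ι ι ℝ} (hM : M.PosDef) {c : ℝ} (hc : 0 < c) :
    Integrable fun Y : ι → ℝ => exp (-(c * (M *ᵥ Y ⬝ᵥ Y))) := by
  obtain ⟨S, rfl⟩ := hM.posSemidef.exists_eq_transpose_mul_self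
  have hS : S.det ≠ 0 := by
    simpa [det_mul, det_transpose] using hM.det_pos.ne'
  simp_rw [← mulVec_mulVec, mulVec_transpose, ← dotProduct_mulVec]
  exact integrable_comp_mulVec hS (by fun_prop) (integrable_exp_neg_mul_dotProduct_self hc)

lemma integral_exp_neg_mul_quadForm {M : Matrix ι ι ℝ} (hM : M.PosDef) (c : ℝ) :
    ∫ Y : ι → ℝ, exp (-(c * (M *ᵥ Y ⬝ᵥ Y))) = √(π / c) ^ Fintype.card ι / √M.det := by
  obtain ⟨S, rfl⟩ := hM.posSemidef.exists_eq_transpose_mul_self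
  have hS : S.det ≠ 0 := by
    simpa [det_mul, det_transpose] using hM.det_pos.ne'
  simp_rw [← mulVec_mulVec, mulVec_transpose, ← dotProduct_mulVec]
  rw [integral_comp_mulVec hS (g := fun u => exp (-(c * (u ⬝ᵥ u)))) (by fun_prop),
    integral_exp_neg_mul_dotProduct_self, det_mul, det_transpose, ← sq, sqrt_sq_eq_abs,
    inv_mul_eq_div]

end Gaussian

section BoundedDensity

variable {α E : Type*} [MeasurableSpace α] {μ : Measure α} [NormedAddCommGroup E]

lemma lintegral_mul_enorm_le_rpow_mul_eLpNorm {k : α → ℝ≥0∞} {C : ℝ≥0∞} (hk : AEMeasurable k μ)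
    (hkC : ∀ x, k x ≤ C) (hk1 : ∫⁻ x, k x ∂μ ≤ 1) {p : ℝ} (hp : 1 ≤ p) {f : α → E}
    (hf : AEStronglyMeasurable f μ) :
    ∫⁻ x, k x * ‖f x‖ₑ ∂μ ≤ C ^ (1 / p) * eLpNorm f (ENNReal.ofReal p) μ := by
  rcases hp.eq_or_lt with rfl | hp
  · calc ∫⁻ x, k x * ‖f x‖ₑ ∂μ ≤ ∫⁻ x, C * ‖f x‖ₑ ∂μ :=
          lintegral_mono fun x => mul_le_mul_left (hkC x) _
      _ = C ^ (1 / 1 : ℝ) * eLpNorm f (ENNReal.ofReal 1) μ := by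
          simp [lintegral_const_mul'' _ hf.enorm, eLpNorm_one_eq_lintegral_enorm]
  set q := p.conjExponent
  have hpq : p.HolderConjugate q := .conjExponent hp
  have hkq : ∫⁻ x, k x ^ q ∂μ ≤ C ^ (q - 1) := calc
    ∫⁻ x, k x ^ q ∂μ ≤ ∫⁻ x, C ^ (q - 1) * k x ∂μ := lintegral_mono fun x => by
        rw [← sub_add_cancel q 1, ENNReal.rpow_add_of_nonneg _ _ (by linarith [hpq.symm.lt])
          zero_le_one, ENNReal.rpow_one, add_sub_cancel_right]
        gcongr
        · linarith [hpq.symm.lt]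
        · exact hkC x
    _ = C ^ (q - 1) * ∫⁻ x, k x ∂μ := lintegral_const_mul'' _ hk
    _ ≤ C ^ (q - 1) := mul_le_of_le_one_right' hk1
  have hexp : (q - 1) * (1 / q) = 1 / p := by
    have := hpq.mul_eq_add
    field_simp [hpq.ne_zero, hpq.symm.ne_zero]
    linarith
  calc ∫⁻ x, k x * ‖f x‖ₑ ∂μ = ∫⁻ x, ((‖f ·‖ₑ) * k) x ∂μ := lintegral_congr fun x => mul_comm _ _
    _ ≤ (∫⁻ x, ‖f x‖ₑ ^ p ∂μ) ^ (1 / p) * (∫⁻ x, k x ^ q ∂μ) ^ (1 / q) :=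
        ENNReal.lintegral_mul_le_Lp_mul_Lq μ hpq hf.enorm hk
    _ ≤ eLpNorm f (ENNReal.ofReal p) μ * (C ^ (q - 1)) ^ (1 / q) := by
        rw [eLpNorm_eq_lintegral_rpow_enorm_toReal (ENNReal.ofReal_pos.mpr (by linarith)).ne'
          ENNReal.ofReal_ne_top,
          ENNReal.toReal_ofReal hpq.nonneg]
        gcongr
        exact hpq.symm.one_div_nonneg
    _ = C ^ (1 / p) * eLpNorm f (ENNReal.ofReal p) μ := by
        rw [← ENNReal.rpow_mul, hexp, mul_comm]

lemma abs_integral_mul_le_rpow_mul_eLpNorm {k f : α → ℝ} {C p : ℝ} (hk0 : ∀ x, 0 ≤ k x)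
    (hkC : ∀ x, k x ≤ C) (hk : Integrable k μ) (hk1 : ∫ x, k x ∂μ ≤ 1) (hp : 1 ≤ p)
    (hf : MemLp f (ENNReal.ofReal p) μ) :
    |∫ x, k x * f x ∂μ| ≤ C ^ (1 / p) * (eLpNorm f (ENNReal.ofReal p) μ).toReal := by
  rcases isEmpty_or_nonempty α with hα | ⟨⟨x₀⟩⟩
  · simp [integral_of_isEmpty]
  have hC : 0 ≤ C := (hk0 x₀).trans (hkC x₀)
  have hk1' : ∫⁻ x, ENNReal.ofReal (k x) ∂μ ≤ 1 := by
    rw [← ofReal_integral_eq_lintegral_ofReal hk (ae_of_all _ hk0)]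
    exact ENNReal.ofReal_le_one.mpr hk1
  have key := lintegral_mul_enorm_le_rpow_mul_eLpNorm hk.aemeasurable.ennreal_ofReal
    (fun x => ENNReal.ofReal_le_ofReal (hkC x)) hk1' hp hf.1
  calc |∫ x, k x * f x ∂μ| = ‖∫ x, k x * f x ∂μ‖ₑ.toReal := by simp [enorm_eq_ofReal_abs]
    _ ≤ (∫⁻ x, ‖k x * f x‖ₑ ∂μ).toReal := by
        refine ENNReal.toReal_mono ?_ (enorm_integral_le_lintegral_enorm _)
        simp only [enorm_mul, enorm_of_nonneg (hk0 _)]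
        exact (key.trans_lt (by finiteness [hf.2])).ne
    _ ≤ (ENNReal.ofReal C ^ (1 / p) * eLpNorm f (ENNReal.ofReal p) μ).toReal := by
        refine ENNReal.toReal_mono (by finiteness [hf.2]) ?_
        simpa only [enorm_mul, enorm_of_nonneg (hk0 _)] using key
    _ = C ^ (1 / p) * (eLpNorm f (ENNReal.ofReal p) μ).toReal := by
        rw [ENNReal.toReal_mul, ← ENNReal.toReal_rpow, ENNReal.toReal_ofReal hC]

end BoundedDensity

section Subordination

-- The integrand that `integral_comp_rpow_Ioi` produces for the substitution `t = x⁻¹`.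
lemma rpow_neg_mul_exp_neg_div_comp_inv {a c x : ℝ} (hx : 0 < x) :
    (|(-1 : ℝ)| * x ^ ((-1 : ℝ) - 1)) • ((x ^ (-1 : ℝ)) ^ (-c) * exp (-a / x ^ (-1 : ℝ)))
      = x ^ (c - 2) * exp (-a * x ^ (1 : ℝ)) := by
  rw [rpow_neg_one, inv_rpow hx.le, rpow_neg hx.le c, inv_inv, div_inv_eq_mul, smul_eq_mul,
    abs_neg, abs_one, one_mul, ← mul_assoc, ← rpow_add hx, rpow_one]
  ring_nf

lemma integrableOn_rpow_neg_mul_exp_neg_div {a c : ℝ} (ha : 0 < a) (hc : 1 < c) :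
    IntegrableOn (fun t => t ^ (-c) * exp (-a / t)) (Ioi 0) := by
  rw [← integrableOn_Ioi_comp_rpow_iff (fun t => t ^ (-c) * exp (-a / t)) (p := -1) (by norm_num)]
  refine (integrableOn_rpow_mul_exp_neg_mul_rpow (by linarith) one_pos ha).congr_fun
    (fun x hx => (rpow_neg_mul_exp_neg_div_comp_inv hx).symm) measurableSet_Ioi

lemma integral_rpow_neg_mul_exp_neg_div {a c : ℝ} (ha : 0 < a) (hc : 1 < c) :
    ∫ t in Ioi 0, t ^ (-c) * exp (-a / t) = a ^ (-(c - 1)) * Gamma (c - 1) := by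
  rw [← integral_comp_rpow_Ioi (fun t => t ^ (-c) * exp (-a / t)) (p := -1) (by norm_num),
    setIntegral_congr_fun measurableSet_Ioi fun x hx => rpow_neg_mul_exp_neg_div_comp_inv hx,
    integral_rpow_mul_exp_neg_mul_rpow one_pos (by linarith) ha]
  ring_nf

lemma abs_poisson_subordination_le {u : ℝ → ℝ} {A β z : ℝ} (hz : 0 < z) (hβ : -(1 / 2) < β)
    (hu : ∀ t > 0, |u t| ≤ A * t ^ (-β)) :
    |∫ t in Ioi 0, z * t ^ (-(3 : ℝ) / 2) * exp (-(z ^ 2) / (4 * t)) * u t|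
      ≤ 4 ^ (β + 1 / 2) * Gamma (β + 1 / 2) * A * z ^ (-(2 * β)) := by
  have hc : 1 < 3 / 2 + β := by linarith
  have ha : 0 < z ^ 2 / 4 := by positivity
  have hweight : ∀ t > 0, z * t ^ (-(3 : ℝ) / 2) * exp (-(z ^ 2) / (4 * t)) * (A * t ^ (-β))
      = z * A * (t ^ (-(3 / 2 + β)) * exp (-(z ^ 2 / 4) / t)) := fun t ht => by
    rw [neg_add, rpow_add ht, show -(z ^ 2) / (4 * t) = -(z ^ 2 / 4) / t by ring]
    ring_nf
  calc |∫ t in Ioi 0, z * t ^ (-(3 : ℝ) / 2) * exp (-(z ^ 2) / (4 * t)) * u t|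
      ≤ ∫ t in Ioi 0, z * A * (t ^ (-(3 / 2 + β)) * exp (-(z ^ 2 / 4) / t)) := by
        rw [← norm_eq_abs]
        refine norm_integral_le_of_norm_le
          ((integrableOn_rpow_neg_mul_exp_neg_div ha hc).const_mul _) ?_
        refine (ae_restrict_iff' measurableSet_Ioi).mpr (ae_of_all _ fun t (ht : 0 < t) => ?_)
        rw [← hweight t ht, norm_mul, norm_of_nonneg (by positivity)]
        exact mul_le_mul_of_nonneg_left (hu t ht) (by positivity)
    _ = z * A * ((z ^ 2 / 4) ^ (-(3 / 2 + β - 1)) * Gamma (3 / 2 + β - 1)) := by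
        rw [integral_const_mul, integral_rpow_neg_mul_exp_neg_div ha hc]
    _ = 4 ^ (β + 1 / 2) * Gamma (β + 1 / 2) * A * z ^ (-(2 * β)) := by
        rw [div_rpow (by positivity) (by norm_num), ← rpow_natCast, ← rpow_mul hz.le,
          rpow_neg (by norm_num : (0 : ℝ) ≤ 4), div_inv_eq_mul,
          show -(2 * β) = 1 + (2 : ℕ) * -(3 / 2 + β - 1) by push_cast; ring, rpow_add hz, rpow_one]
        ring_nf

end Subordination

section HormanderKernel

variable {N : ℕ} (Q B : Matrix (Fin N) (Fin N) ℝ)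

lemma omegaN_pos (N : ℕ) : 0 < omegaN N :=
  ENNReal.toReal_pos (Metric.measure_ball_pos volume _ one_pos).ne' measure_ball_lt_top.ne

lemma hkernel_prefactor_nonneg (t : ℝ) : 0 ≤ (4 * π) ^ (-(N : ℝ) / 2) * omegaN N / hV Q B t :=
  div_nonneg (mul_nonneg (rpow_nonneg (by positivity) _) (omegaN_pos N).le)
    (mul_nonneg (omegaN_pos N).le (sqrt_nonneg _))

lemma hkernel_nonneg (X Y : Fin N → ℝ) (t : ℝ) : 0 ≤ hkernel Q B X Y t :=
  mul_nonneg (hkernel_prefactor_nonneg Q B t) (exp_pos _).le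

lemma hkernel_le {t : ℝ} (ht : 0 ≤ t) (X Y : Fin N → ℝ) :
    hkernel Q B X Y t ≤ (4 * π) ^ (-(N : ℝ) / 2) * omegaN N / hV Q B t := by
  refine mul_le_of_le_one_right (hkernel_prefactor_nonneg Q B t) (exp_le_one_iff.mpr ?_)
  exact div_nonpos_of_nonpos_of_nonneg (neg_nonpos.mpr (sq_nonneg _)) (by positivity)

variable {Q B} {t : ℝ}

lemma hkernel_eq_of_posDef (hKt : (hK Q B t).PosDef) (X Y : Fin N → ℝ) :
    hkernel Q B X Y t = (4 * π) ^ (-(N : ℝ) / 2) * omegaN N / hV Q B t *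
      exp (-((4 * t)⁻¹ * ((hK Q B t)⁻¹ *ᵥ (Y - NormedSpace.exp (t • B) *ᵥ X)
        ⬝ᵥ (Y - NormedSpace.exp (t • B) *ᵥ X)))) := by
  rw [hkernel, hm, sq_sqrt]
  · ring_nf
  · simpa [dotProduct_comm] using hKt.inv.posSemidef.dotProduct_mulVec_nonneg (Y - _)

lemma integrable_hkernel (ht : 0 < t) (hKt : (hK Q B t).PosDef) (X : Fin N → ℝ) :
    Integrable fun Y => hkernel Q B X Y t := by
  simp_rw [hkernel_eq_of_posDef hKt]
  exact ((integrable_exp_neg_mul_quadForm hKt.inv (inv_pos.mpr (by positivity))).comp_sub_right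
    (NormedSpace.exp (t • B) *ᵥ X)).const_mul _

lemma integral_hkernel (ht : 0 < t) (hKt : (hK Q B t).PosDef) (X : Fin N → ℝ) :
    ∫ Y, hkernel Q B X Y t = 1 := by
  simp_rw [hkernel_eq_of_posDef hKt]
  rw [integral_const_mul, integral_sub_right_eq_self
      (fun u => exp (-((4 * t)⁻¹ * ((hK Q B t)⁻¹ *ᵥ u ⬝ᵥ u)))),
    integral_exp_neg_mul_quadForm hKt.inv, det_nonsing_inv, Ring.inverse_eq_inv, sqrt_inv, hV,
    det_smul, Fintype.card_fin, sqrt_mul (pow_nonneg ht.le _),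
    show π / (4 * t)⁻¹ = (4 * π) * t by field_simp, sqrt_mul (by positivity), mul_pow]
  have hsqrt_pow : √(t ^ N) = √t ^ N := by
    rw [← sqrt_sq (by positivity : 0 ≤ √t ^ N), ← pow_mul, mul_comm, pow_mul, sq_sqrt ht.le]
  have h4π : (4 * π) ^ (-(N : ℝ) / 2) = (√(4 * π) ^ N)⁻¹ := by
    rw [sqrt_eq_rpow, ← rpow_natCast, ← rpow_mul (by positivity), ← rpow_neg (by positivity)]
    ring_nf
  have := hKt.det_pos
  have := omegaN_pos N
  rw [h4π, hsqrt_pow]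
  field_simp

end HormanderKernel

section Ultracontractivity

variable {N : ℕ} {Q B : Matrix (Fin N) (Fin N) ℝ} {t p : ℝ} {f : (Fin N → ℝ) → ℝ}

lemma abs_hP_le (ht : 0 < t) (hKt : (hK Q B t).PosDef) (hp : 1 ≤ p)
    (hf : MemLp f (ENNReal.ofReal p) volume) (X : Fin N → ℝ) :
    |hP Q B t f X| ≤ ((4 * π) ^ (-(N : ℝ) / 2) * omegaN N / hV Q B t) ^ (1 / p) *
      (eLpNorm f (ENNReal.ofReal p) volume).toReal :=
  abs_integral_mul_le_rpow_mul_eLpNorm (hkernel_nonneg Q B X · t) (hkernel_le Q B ht.le X)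
    (integrable_hkernel ht hKt X) (integral_hkernel ht hKt X).le hp hf

lemma abs_hP_le_of_volume_growth {D γD : ℝ} (hγ : 0 < γD) (ht : 0 < t)
    (hvol : γD * t ^ (D / 2) ≤ hV Q B t) (hKt : (hK Q B t).PosDef) (hp : 1 ≤ p)
    (hf : MemLp f (ENNReal.ofReal p) volume) (X : Fin N → ℝ) :
    |hP Q B t f X| ≤ ((4 * π) ^ (-(N : ℝ) / 2) * omegaN N / γD) ^ (1 / p) *
      (eLpNorm f (ENNReal.ofReal p) volume).toReal * t ^ (-(D / (2 * p))) := by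
  have ha : 0 ≤ (4 * π) ^ (-(N : ℝ) / 2) * omegaN N :=
    mul_nonneg (rpow_nonneg (by positivity) _) (omegaN_pos N).le
  calc |hP Q B t f X|
      ≤ ((4 * π) ^ (-(N : ℝ) / 2) * omegaN N / hV Q B t) ^ (1 / p) *
          (eLpNorm f (ENNReal.ofReal p) volume).toReal := abs_hP_le ht hKt hp hf X
    _ ≤ ((4 * π) ^ (-(N : ℝ) / 2) * omegaN N / (γD * t ^ (D / 2))) ^ (1 / p) *
          (eLpNorm f (ENNReal.ofReal p) volume).toReal := by
        gcongr
        exact hkernel_prefactor_nonneg Q B t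
    _ = _ := by
        rw [← div_div, div_eq_mul_inv _ (t ^ _), mul_rpow (div_nonneg ha hγ.le) (by positivity),
          ← rpow_neg ht.le, ← rpow_mul ht.le]
        ring_nf

end Ultracontractivity

theorem poisson_ultracontractive_general
    (N : ℕ) (Q B : Matrix (Fin N) (Fin N) ℝ)
    (hHor : ∀ t > 0, (hK Q B t).PosDef)
    (D γD : ℝ) (hD : 0 < D) (hγ : 0 < γD)
    (hvol : ∀ t > 0, γD * t ^ (D / 2) ≤ hV Q B t)
    (p : ℝ) (hp : 1 ≤ p) :
    ∃ C₁ > (0:ℝ), ∀ f : (Fin N → ℝ) → ℝ, MemLp f (ENNReal.ofReal p) volume →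
      ∀ X : Fin N → ℝ, ∀ z > (0:ℝ),
        |poisson Q B z f X| ≤
          C₁ * z ^ (-(D / p)) * (eLpNorm f (ENNReal.ofReal p) volume).toReal := by
  have hp0 : 0 < p := by linarith
  have hβ : 0 < D / (2 * p) := by positivity
  set A := ((4 * π) ^ (-(N : ℝ) / 2) * omegaN N / γD) ^ (1 / p)
  have hA : 0 < A := rpow_pos_of_pos (div_pos (mul_pos (by positivity) (omegaN_pos N)) hγ) _
  refine ⟨(4 * π) ^ (-(1 : ℝ) / 2) * (4 ^ (D / (2 * p) + 1 / 2) * Gamma (D / (2 * p) + 1 / 2) * A),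
    by have := Gamma_pos_of_pos (by linarith : 0 < D / (2 * p) + 1 / 2); positivity,
    fun f hf X z hz => ?_⟩
  have hsub := abs_poisson_subordination_le (u := fun t => hP Q B t f X) hz (by linarith)
    fun t ht => abs_hP_le_of_volume_growth hγ ht (hvol t ht) (hHor t ht) hp hf X
  rw [poisson, abs_mul, abs_of_pos (by positivity),
    show -(D / p) = -(2 * (D / (2 * p))) by field_simp]
  calc _ ≤ (4 * π) ^ (-(1 : ℝ) / 2) * (4 ^ (D / (2 * p) + 1 / 2) * Gamma (D / (2 * p) + 1 / 2) *
        (A * (eLpNorm f (ENNReal.ofReal p) volume).toReal) * z ^ (-(2 * (D / (2 * p))))) :=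
        mul_le_mul_of_nonneg_left hsub (by positivity)
    _ = _ := by ring

/-- ultracontractivity of the Poisson semigroup. -/
theorem poisson_ultracontractive
    (N : ℕ) (hN : 2 ≤ N) (Q B : Matrix (Fin N) (Fin N) ℝ)
    (hQ : Q.PosSemidef)
    (hHor : ∀ t > 0, (hK Q B t).PosDef)
    (D γD : ℝ) (hD : 0 < D) (hγ : 0 < γD)
    (hvol : ∀ t > 0, γD * t ^ (D / 2) ≤ hV Q B t)
    (p : ℝ) (hp : 1 ≤ p) :
    ∃ C₁ > (0:ℝ), ∀ f : (Fin N → ℝ) → ℝ, MemLp f (ENNReal.ofReal p) volume →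
      ∀ X : Fin N → ℝ, ∀ z > (0:ℝ),
        |poisson Q B z f X| ≤
          C₁ * z ^ (-(D / p)) * (eLpNorm f (ENNReal.ofReal p) volume).toReal :=
  poisson_ultracontractive_general N Q B hHor D γD hD hγ hvol p hp
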